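/- The Mycielskian of a graph G satisfies χ(M(G)) = χ(G) + 1. -/

import Mathlib

set_option linter.unreachableTactic false
set_option linter.unusedTactic false
set_option linter.unnecessarySeqFocus false

/-- Adjacency relation of the Mycielskian of `G`: vertices are `v`-copies (`inl a`),
`u`-copies (`inr (inl a)`) and the apex `w` (`inr (inr ())`). -/
def mycielskAdj {V : Type} (G : SimpleGraph V) :
    V ⊕ V ⊕ Unit → V ⊕ V ⊕ Unit → Prop
  | Sum.inl a, Sum.inl b => G.Adj a b
  | Sum.inl a, Sum.inr (Sum.inl b) => G.Adj a b
  | Sum.inr (Sum.inl a), Sum.inl b => G.Adj a b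
  | Sum.inr (Sum.inl _), Sum.inr (Sum.inr _) => True
  | Sum.inr (Sum.inr _), Sum.inr (Sum.inl _) => True
  | _, _ => False

/-- The Mycielskian `M(G)` of a graph `G`. -/
def mycielskian {V : Type} (G : SimpleGraph V) : SimpleGraph (V ⊕ V ⊕ Unit) where
  Adj := mycielskAdj G
  symm := ⟨by
    rintro (a | b | c) (x | y | z) h <;>
      simp only [mycielskAdj] at h ⊢ <;> first | exact G.adj_symm h | exact h | trivial⟩
  loopless := ⟨by
    rintro (a | b | c) h <;> simp only [mycielskAdj] at h <;>
      first | exact G.irrefl h | exact h⟩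


namespace SimpleGraph

variable {V : Type} {G : SimpleGraph V} {n : ℕ}

/-- Colour each `u`-copy like its `v`-copy and the apex with a fresh colour. -/
theorem Colorable.mycielskian_succ (h : G.Colorable n) : (mycielskian G).Colorable (n + 1) := by
  obtain ⟨C⟩ := h
  refine ⟨Coloring.mk
    (fun | .inl a => (C a).castSucc | .inr (.inl a) => (C a).castSucc | .inr (.inr _) => Fin.last n)
    ?_⟩
  rintro (a | a | _) (b | b | _) hab <;> simp only [mycielskian, mycielskAdj] at hab
  · exact (C.valid hab <| Fin.castSucc_injective _ ·)
  · exact (C.valid hab <| Fin.castSucc_injective _ ·)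
  · exact (C.valid hab <| Fin.castSucc_injective _ ·)
  · exact (Fin.castSucc_lt_last _).ne
  · exact (Fin.castSucc_lt_last _).ne'

/-- The `u`-copies avoid the apex colour `c`, and `v a` has the same neighbours in `G` as `u a`,
so recolouring every `v a` of colour `c` with the colour of `u a` leaves `c` unused. -/
theorem Colorable.of_mycielskian_succ (h : (mycielskian G).Colorable (n + 1)) : G.Colorable n := by
  obtain ⟨C⟩ := h
  set c := C (.inr (.inr ()))
  have hu (a : V) : C (.inr (.inl a)) ≠ c := C.valid (show (mycielskian G).Adj _ _ from trivial)
  let f (a : V) : {x // x ≠ c} :=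
    if hv : C (.inl a) = c then ⟨C (.inr (.inl a)), hu a⟩ else ⟨C (.inl a), hv⟩
  have hf {a b : V} (hab : G.Adj a b) : f a ≠ f b := by
    have hvv : C (.inl a) ≠ C (.inl b) := C.valid (show (mycielskian G).Adj _ _ from hab)
    have huv : C (.inr (.inl a)) ≠ C (.inl b) := C.valid (show (mycielskian G).Adj _ _ from hab)
    have hvu : C (.inl a) ≠ C (.inr (.inl b)) := C.valid (show (mycielskian G).Adj _ _ from hab)
    simp only [f, ne_eq]
    split_ifs with ha hb hb <;> simp only [Subtype.mk.injEq]
    exacts [absurd (ha.trans hb.symm) hvv, huv, hvu, hvv]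
  simpa [Fintype.card_subtype_compl] using (Coloring.mk f hf).colorable

theorem mycielskian_colorable_succ_iff :
    (mycielskian G).Colorable (n + 1) ↔ G.Colorable n :=
  ⟨Colorable.of_mycielskian_succ, Colorable.mycielskian_succ⟩

theorem mycielskian_not_colorable_zero : ¬(mycielskian G).Colorable 0 := fun ⟨C⟩ ↦
  (C (.inr (.inr ()))).elim0

end SimpleGraph

open SimpleGraph in
theorem stmt_8_general {V : Type} (G : SimpleGraph V) :
    (mycielskian G).chromaticNumber = G.chromaticNumber + 1 := by
  refine WithTop.eq_of_forall_le_coe_iff fun m ↦ ?_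
  change _ ≤ (m : ℕ∞) ↔ _ ≤ (m : ℕ∞)
  rcases m with _ | k
  · exact iff_of_false (chromaticNumber_le_iff_colorable.not.mpr mycielskian_not_colorable_zero)
      (by simp)
  · rw [chromaticNumber_le_iff_colorable, mycielskian_colorable_succ_iff, Nat.cast_succ,
      ENat.add_le_add_iff_right ENat.one_ne_top, chromaticNumber_le_iff_colorable]

/-- The Mycielskian of a graph `G` satisfies `χ(M(G)) = χ(G) + 1`. -/
theorem stmt_8 {V : Type} [Fintype V] (G : SimpleGraph V) :
    (mycielskian G).chromaticNumber = G.chromaticNumber + 1 :=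
  stmt_8_general G
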